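/- arXiv:2308.10655 — 2 statements merged into one kernel-verified Lean document; each statement's English description precedes it below -/
import Mathlib

section
/- Let p be any primitive and p_1, ..., p_n be primitives, each either a tell primitive or a graphical primitive, and let F be a propositional state formula on stores. Assume that the si-terms told by the tell primitives among p_1, ..., p_n are distinct from all si-terms occurring in F (so that telling them does not change the truth value of F on any store). Then the guarded list GL = [p → p_1,...,p_n] is an F-preserving contraction of the sequential composition SC = p; p_1; ...; p_n: for every store τ, Oh(GL)(τ) is an F-preserving contraction of Oh(SC)(τ). It follows that the reachability formula Reach(F) holds of the executions of SC from any store τ if and only if it holds of the executions of GL from τ. -/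
namespace Bach

/-- Primitives: the store primitives tell/ask/nask/get over si-terms `I`,
together with graphical primitives from `G`. -/
inductive Prim (I : Type) (G : Type) where
  | tell (t : I)
  | ask (t : I)
  | nask (t : I)
  | get (t : I)
  | gr (g : G)

/-- A store is a finite multiset of si-terms. -/
abbrev Store (I : Type) := Multiset I

/-- One-step semantics of primitives: `primStep p σ τ` iff `⟨p,σ⟩ → ⟨E,τ⟩`:
`tell(t)` adds `t`; `ask(t)` requires `t` present; `nask(t)` requires `t` absent;
`get(t)` removes one occurrence of `t`; graphical primitives always succeed
leaving the store unchanged. -/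
def primStep {I G : Type} : Prim I G → Store I → Store I → Prop
  | .tell t, σ, τ => τ = t ::ₘ σ
  | .ask t, σ, τ => t ∈ σ ∧ τ = σ
  | .nask t, σ, τ => t ∉ σ ∧ τ = σ
  | .get t, σ, τ => σ = t ::ₘ τ
  | .gr _, σ, τ => τ = σ

/-- Successive execution of a list of primitives. -/
def listExec {I G : Type} : List (Prim I G) → Store I → Store I → Prop
  | [], σ, τ => τ = σ
  | p :: l, σ, τ => ∃ ρ, primStep p σ ρ ∧ listExec l ρ τ

/-- Agents: primitives, guarded lists `[p → p₁,…,pₙ]`, sequential (`;`),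
parallel (`∥`) and choice (`+`) composition. -/
inductive Agent (I : Type) (G : Type) where
  | prim (p : Prim I G)
  | glist (p : Prim I G) (l : List (Prim I G))
  | seq (A B : Agent I G)
  | par (A B : Agent I G)
  | choice (A B : Agent I G)

/-- Transition relation: `Step A σ o τ` means `⟨A,σ⟩ → ⟨o,τ⟩`, where `o = none`
stands for the terminated symbol `E` (and `E;A`, `E∥A`, `A∥E` are identified
with `A`).  A guarded list makes a single transition from `σ` to `τ` iff its
guard makes a transition from `σ` to some `ρ` and executing the remaining
primitives successively from `ρ` ends in `τ`. -/
inductive Step {I G : Type} : Agent I G → Store I → Option (Agent I G) → Store I → Prop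
  | prim {p σ τ} : primStep p σ τ → Step (.prim p) σ none τ
  | glist {p l σ ρ τ} : primStep p σ ρ → listExec l ρ τ → Step (.glist p l) σ none τ
  | seqE {A B σ τ} : Step A σ none τ → Step (.seq A B) σ (some B) τ
  | seqS {A A' B σ τ} : Step A σ (some A') τ → Step (.seq A B) σ (some (.seq A' B)) τ
  | parLE {A B σ τ} : Step A σ none τ → Step (.par A B) σ (some B) τ
  | parLS {A A' B σ τ} : Step A σ (some A') τ → Step (.par A B) σ (some (.par A' B)) τ
  | parRE {A B σ τ} : Step B σ none τ → Step (.par A B) σ (some A) τ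
  | parRS {A B B' σ τ} : Step B σ (some B') τ → Step (.par A B) σ (some (.par A B')) τ
  | choiceL {A B σ o τ} : Step A σ o τ → Step (.choice A B) σ o τ
  | choiceR {A B σ o τ} : Step B σ o τ → Step (.choice A B) σ o τ

/-- Configurations `⟨A,σ⟩`, with `none` standing for the terminated symbol `E`. -/
abbrev Conf (I G : Type) := Option (Agent I G) × Store I

/-- Step relation on configurations. -/
def CStep {I G : Type} : Conf I G → Conf I G → Prop
  | (some A, σ), (o, τ) => Step A σ o τ
  | (none, _), _ => False

/-- Observables `Of(A)`: final stores of finite computations from the empty store,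
marked `true` (= δ⁺, success: ending in `E`) or `false` (= δ⁻, deadlock: ending
stuck in some agent `B ≠ E`). -/
def Obs {I G : Type} (A : Agent I G) : Set (Store I × Bool) :=
  {x | Relation.ReflTransGen CStep ((some A, (0 : Store I)) : Conf I G) (none, x.1) ∧
        x.2 = true}
  ∪ {x | (∃ B, Relation.ReflTransGen CStep ((some A, (0 : Store I)) : Conf I G) (some B, x.1) ∧
          ∀ c, ¬ CStep ((some B, x.1) : Conf I G) c) ∧ x.2 = false}

/-- A language is a set of agents closed under `;`, `∥` and `+`. -/
def IsLanguage {I G : Type} (L : Set (Agent I G)) : Prop :=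
  (∀ A B, A ∈ L → B ∈ L → Agent.seq A B ∈ L) ∧
  (∀ A B, A ∈ L → B ∈ L → Agent.par A B ∈ L) ∧
  (∀ A B, A ∈ L → B ∈ L → Agent.choice A B ∈ L)

/-- `IsModularEmbedding C D L' L`: the coder `C` maps `L'` into `L` and is
compositional w.r.t. `;`, `∥`, `+` (property P₂); the element-wise decoder `D`
preserves the termination mark δ⁺/δ⁻ (property P₃); and for every `A ∈ L'`,
`Of(A) = { D x : x ∈ Of(C A) }` (commuting diagram, with P₁ built in by taking
`D` element-wise). -/
def IsModularEmbedding {I G : Type} (C : Agent I G → Agent I G)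
    (D : Store I × Bool → Store I × Bool) (L' L : Set (Agent I G)) : Prop :=
  (∀ A ∈ L', C A ∈ L) ∧
  (∀ A B, A ∈ L' → B ∈ L' → C (Agent.seq A B) = Agent.seq (C A) (C B)) ∧
  (∀ A B, A ∈ L' → B ∈ L' → C (Agent.par A B) = Agent.par (C A) (C B)) ∧
  (∀ A B, A ∈ L' → B ∈ L' → C (Agent.choice A B) = Agent.choice (C A) (C B)) ∧
  (∀ x, (D x).2 = x.2) ∧
  (∀ A ∈ L', Obs A = D '' Obs (C A))

/-- Modular embedding of `L'` into `L`, written `L' ≤ L`. -/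
def ModEmbed {I G : Type} (L' L : Set (Agent I G)) : Prop :=
  ∃ C D, IsModularEmbedding C D L' L

/-- Kinds of store primitives. -/
inductive PKind where
  | ask | nask | get | tell

/-- The primitive uses only store-primitive kinds from `X`
(graphical primitives are always allowed). -/
def primIn {I G : Type} (X : Set PKind) : Prim I G → Prop
  | .tell _ => PKind.tell ∈ X
  | .ask _ => PKind.ask ∈ X
  | .nask _ => PKind.nask ∈ X
  | .get _ => PKind.get ∈ X
  | .gr _ => True

/-- All primitives occurring in the agent use only kinds from `X`. -/
def agentIn {I G : Type} (X : Set PKind) : Agent I G → Prop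
  | .prim p => primIn X p
  | .glist p l => primIn X p ∧ ∀ q ∈ l, primIn X q
  | .seq A B => agentIn X A ∧ agentIn X B
  | .par A B => agentIn X A ∧ agentIn X B
  | .choice A B => agentIn X A ∧ agentIn X B

/-- The agent contains no guarded list construct. -/
def glFree {I G : Type} : Agent I G → Prop
  | .prim _ => True
  | .glist _ _ => False
  | .seq A B => glFree A ∧ glFree B
  | .par A B => glFree A ∧ glFree B
  | .choice A B => glFree A ∧ glFree B

/-- `gdLg(X)`: the fragment with guarded lists using store primitives from `X`. -/
def gdLg {I G : Type} (X : Set PKind) : Set (Agent I G) := {A | agentIn X A}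

/-- `rLg(X)`: the fragment without guarded lists using store primitives from `X`. -/
def rLg {I G : Type} (X : Set PKind) : Set (Agent I G) := {A | agentIn X A ∧ glFree A}

/-- Computational histories: finite sequences of stores ended by a success mark
δ⁺ (`true`) or deadlock mark δ⁻ (`false`), or infinite sequences of stores. -/
inductive Hist (I : Type) where
  | fin (l : List (Store I)) (success : Bool)
  | inf (f : ℕ → Store I)

/-- History-based operational semantics `Oh(A)(τ)`: the sequences of stores along
maximal transition sequences from `⟨A,τ⟩`, marked δ⁺ if ending in `E`, δ⁻ if
ending stuck in a non-`E` agent, and infinite otherwise. -/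
def Oh {I G : Type} (A : Agent I G) (τ : Store I) : Set (Hist I) :=
  {h | ∃ cs : List (Conf I G),
      cs.Chain' CStep ∧ cs.head? = some (some A, τ) ∧
      (((∃ σ, cs.getLast? = some ((none : Option (Agent I G)), σ)) ∧
          h = Hist.fin (cs.map Prod.snd) true) ∨
       ((∃ B σ, cs.getLast? = some (some B, σ) ∧ ∀ c, ¬ CStep ((some B, σ) : Conf I G) c) ∧
          h = Hist.fin (cs.map Prod.snd) false))}
  ∪ {h | ∃ f : ℕ → Conf I G, f 0 = (some A, τ) ∧ (∀ n, CStep (f n) (f (n + 1))) ∧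
      h = Hist.inf fun n => (f n).2}

/-- `Contraction h_c h` (`h_c ⪯ h`): `h_c` is obtained from `h` by removing
finitely many (possibly zero) stores, never a termination mark. -/
def Contraction {I : Type} : Hist I → Hist I → Prop
  | .fin lc bc, .fin l b => bc = b ∧ lc.Sublist l
  | .inf fc, .inf f =>
      ∃ g : ℕ → ℕ, StrictMono g ∧ (Set.range g)ᶜ.Finite ∧ ∀ n, fc n = f (g n)
  | _, _ => False

/-- `FCon F lc l`: the list `lc` of stores is an F-preserving contraction of `l`:
each removed store `ρ` agrees on `F` with the next kept store. -/
inductive FCon {I : Type} (F : Store I → Prop) : List (Store I) → List (Store I) → Prop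
  | nil : FCon F [] []
  | keep {σ lc l} : FCon F lc l → FCon F (σ :: lc) (σ :: l)
  | drop {σ ρ lc l} : (F ρ ↔ F σ) → FCon F (σ :: lc) l → FCon F (σ :: lc) (ρ :: l)

/-- `FPCon F h_c h` (`h_c ≪_F h`): `h_c` is an F-preserving contraction of `h`:
a contraction in which every removed store agrees on `F` with the next kept store. -/
def FPCon {I : Type} (F : Store I → Prop) : Hist I → Hist I → Prop
  | .fin lc bc, .fin l b => bc = b ∧ FCon F lc l
  | .inf fc, .inf f =>
      ∃ g : ℕ → ℕ, StrictMono g ∧ (Set.range g)ᶜ.Finite ∧ (∀ n, fc n = f (g n)) ∧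
        ∀ m, m ∉ Set.range g → ∀ n, m < g n → (∀ k < n, g k < m) → (F (f m) ↔ F (f (g n)))
  | _, _ => False

/-- Primitives that always succeed without consulting the store:
tell primitives and graphical primitives. -/
def safePrim {I G : Type} : Prim I G → Prop
  | .tell _ => True
  | .gr _ => True
  | _ => False

/-- The sequential composition `p; p₁; ⋯; pₙ` of a nonempty list of primitives. -/
def seqComp {I G : Type} (p : Prim I G) : List (Prim I G) → Agent I G
  | [] => .prim p
  | q :: l => .seq (.prim p) (seqComp q l)

/-- The history contains a store satisfying `F` (reachability of `F`). -/
def histReach {I : Type} (F : Store I → Prop) : Hist I → Prop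
  | .fin l _ => ∃ σ ∈ l, F σ
  | .inf f => ∃ n, F (f n)

/-- A head is a primitive or a guarded list of primitives. -/
def isHead {I G : Type} : Agent I G → Prop
  | .prim _ => True
  | .glist _ _ => True
  | _ => False

/-- Agents in normal form: `N ::= p | p;A | N+N`, where `p` is a primitive
(store-related or graphical) or a guarded list and `A` is an arbitrary agent. -/
inductive NormalForm {I G : Type} : Agent I G → Prop
  | head {p : Agent I G} : isHead p → NormalForm p
  | seq {p A : Agent I G} : isHead p → NormalForm (Agent.seq p A)
  | choice {N₁ N₂ : Agent I G} : NormalForm N₁ → NormalForm N₂ →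
      NormalForm (Agent.choice N₁ N₂)

/-- Left merge `⌊`: `p⌊Z = p;Z`, `(p;A)⌊Z = p;(A∥Z)`, `(N₁+N₂)⌊Z = N₁⌊Z + N₂⌊Z`. -/
def lmerge {I G : Type} : Agent I G → Agent I G → Agent I G
  | .prim p, Z => .seq (.prim p) Z
  | .glist p l, Z => .seq (.glist p l) Z
  | .seq (.prim p) A, Z => .seq (.prim p) (.par A Z)
  | .seq (.glist p l) A, Z => .seq (.glist p l) (.par A Z)
  | .choice N₁ N₂, Z => .choice (lmerge N₁ Z) (lmerge N₂ Z)
  | N, Z => .seq N Z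

/-- The normalization translation τ: `τ(p) = p`, `τ(X;Y) = τ(X);Y`,
`τ(X+Y) = τ(X)+τ(Y)`, `τ(X∥Y) = τ(X)⌊Y + τ(Y)⌊X`. -/
def tauNF {I G : Type} : Agent I G → Agent I G
  | .prim p => .prim p
  | .glist p l => .glist p l
  | .seq X Y => .seq (tauNF X) Y
  | .choice X Y => .choice (tauNF X) (tauNF Y)
  | .par X Y => .choice (lmerge (tauNF X) Y) (lmerge (tauNF Y) X)

end Bach

open Bach

/-!
A guarded list `[p → p₁,…,pₙ]` makes one transition exactly when its guard `p` can fire, and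
`p; p₁; ⋯; pₙ` fires `p` and then runs `p₁, …, pₙ` to completion, because tell and graphical
primitives can never block and are deterministic. Hence both agents deadlock on the same stores
with history `τ δ⁻`, and otherwise the guarded list yields `τ φ δ⁺` while the sequential
composition yields `τ ρ ρ₁ ⋯ φ δ⁺`. The intermediate stores only differ from `φ` by told
si-terms that `F` ignores, so dropping them preserves `F`; and an F-preserving contraction
neither creates nor destroys a store satisfying `F`. Neither agent has infinite computations,
since every transition shrinks the agent.
-/

namespace Bach

variable {I G : Type}

section Primitives

theorem primStep_functional {p : Prim I G} {σ τ τ' : Store I}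
    (h : primStep p σ τ) (h' : primStep p σ τ') : τ = τ' := by
  cases p with
  | tell t => exact h.trans h'.symm
  | ask t => exact h.2.trans h'.2.symm
  | nask t => exact h.2.trans h'.2.symm
  | get t => exact (Multiset.cons_inj_right t).1 (h.symm.trans h')
  | gr g => exact h.trans h'.symm

theorem exists_primStep_of_safePrim {q : Prim I G} (hq : safePrim q) (σ : Store I) :
    ∃ τ, primStep q σ τ := by
  cases q with
  | tell t => exact ⟨t ::ₘ σ, rfl⟩
  | gr g => exact ⟨σ, rfl⟩
  | _ => exact hq.elim

theorem iff_of_primStep {F : Store I → Prop} {q : Prim I G} (hq : safePrim q)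
    (hF : ∀ t : I, q = Prim.tell t → ∀ σ : Store I, F (t ::ₘ σ) ↔ F σ)
    {σ τ : Store I} (h : primStep q σ τ) : F τ ↔ F σ := by
  cases q with
  | tell t => rw [show τ = t ::ₘ σ from h]; exact hF t rfl σ
  | gr g => rw [show τ = σ from h]
  | _ => exact hq.elim

theorem listExec_functional {l : List (Prim I G)} {σ τ τ' : Store I}
    (h : listExec l σ τ) (h' : listExec l σ τ') : τ = τ' := by
  induction l generalizing σ with
  | nil => exact h.trans h'.symm
  | cons q l ih =>
    obtain ⟨ρ, hq, hl⟩ := h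
    obtain ⟨ρ', hq', hl'⟩ := h'
    obtain rfl := primStep_functional hq hq'
    exact ih hl hl'

theorem exists_listExec {l : List (Prim I G)} (hl : ∀ q ∈ l, safePrim q) (σ : Store I) :
    ∃ τ, listExec l σ τ := by
  induction l generalizing σ with
  | nil => exact ⟨σ, rfl⟩
  | cons q l ih =>
    obtain ⟨ρ, hq⟩ := exists_primStep_of_safePrim (hl q List.mem_cons_self) σ
    obtain ⟨τ, hτ⟩ := ih (fun r hr => hl r (List.mem_cons_of_mem q hr)) ρ
    exact ⟨τ, ρ, hq, hτ⟩

theorem iff_of_listExec {F : Store I → Prop} {l : List (Prim I G)} (hl : ∀ q ∈ l, safePrim q)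
    (hF : ∀ t : I, Prim.tell t ∈ l → ∀ σ : Store I, F (t ::ₘ σ) ↔ F σ)
    {σ τ : Store I} (h : listExec l σ τ) : F τ ↔ F σ := by
  induction l generalizing σ with
  | nil => rw [show τ = σ from h]
  | cons q l ih =>
    obtain ⟨ρ, hq, hl'⟩ := h
    have hqσρ := iff_of_primStep (hl q List.mem_cons_self)
      (fun t ht => hF t (ht ▸ List.mem_cons_self)) hq
    exact (ih (fun r hr => hl r (List.mem_cons_of_mem q hr))
      (fun t ht => hF t (List.mem_cons_of_mem q ht)) hl').trans hqσρ

end Primitives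

section Termination

def Agent.size : Agent I G → ℕ
  | .prim _ => 1
  | .glist _ _ => 1
  | .seq A B => A.size + B.size + 1
  | .par A B => A.size + B.size + 1
  | .choice A B => A.size + B.size + 1

def Conf.size : Conf I G → ℕ
  | (none, _) => 0
  | (some A, _) => A.size

theorem Step.size_lt {A : Agent I G} {σ τ : Store I} {o : Option (Agent I G)}
    (h : Step A σ o τ) : Conf.size (o, τ) < A.size := by
  induction h <;> simp_all only [Conf.size, Agent.size] <;> omega

theorem CStep.size_lt {c c' : Conf I G} (h : CStep c c') : c'.size < c.size := by
  obtain ⟨_ | A, σ⟩ := c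
  · exact h.elim
  · exact Step.size_lt h

theorem not_forall_cStep (f : ℕ → Conf I G) : ¬ ∀ n, CStep (f n) (f (n + 1)) := fun hf => by
  obtain ⟨n, hn⟩ := WellFounded.not_rel_apply_succ (r := (· < ·)) fun n => (f n).size
  exact hn (hf n).size_lt

end Termination

section Runs

inductive MaximalRun : Conf I G → List (Store I) → Bool → Prop
  | done (σ : Store I) : MaximalRun (none, σ) [σ] true
  | stuck {A : Agent I G} {σ : Store I} :
      (∀ c, ¬ CStep ((some A, σ) : Conf I G) c) → MaximalRun (some A, σ) [σ] false
  | step {c c' : Conf I G} {hs : List (Store I)} {b : Bool} :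
      CStep c c' → MaximalRun c' hs b → MaximalRun c (c.2 :: hs) b

theorem maximalRun_of_isChain {b : Bool} :
    ∀ {cs : List (Conf I G)} {c : Conf I G}, cs.IsChain CStep → cs.head? = some c →
    ((∃ σ, cs.getLast? = some ((none : Option (Agent I G)), σ)) ∧ b = true) ∨
      ((∃ B σ, cs.getLast? = some (some B, σ) ∧ ∀ c, ¬ CStep ((some B, σ) : Conf I G) c) ∧
        b = false) →
    MaximalRun c (cs.map Prod.snd) b
  | [c₀], c, _, hhd, hend => by
    obtain rfl : c₀ = c := Option.some.inj hhd
    rcases hend with ⟨⟨σ, hσ⟩, rfl⟩ | ⟨⟨B, σ, hσ, hstuck⟩, rfl⟩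
    · cases hσ; exact .done σ
    · cases hσ; exact .stuck hstuck
  | c₀ :: c₁ :: cs, c, hch, hhd, hend => by
    obtain rfl : c₀ = c := Option.some.inj hhd
    obtain ⟨hstep, hch⟩ := List.isChain_cons_cons.1 hch
    rw [List.getLast?_cons_cons] at hend
    exact .step hstep (maximalRun_of_isChain hch rfl hend)

theorem MaximalRun.exists_isChain {c : Conf I G} {hs : List (Store I)} {b : Bool}
    (h : MaximalRun c hs b) :
    ∃ cs : List (Conf I G), cs.IsChain CStep ∧ cs.head? = some c ∧
      (((∃ σ, cs.getLast? = some ((none : Option (Agent I G)), σ)) ∧ b = true) ∨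
        ((∃ B σ, cs.getLast? = some (some B, σ) ∧ ∀ c, ¬ CStep ((some B, σ) : Conf I G) c) ∧
          b = false)) ∧
      hs = cs.map Prod.snd := by
  induction h with
  | done σ => exact ⟨[(none, σ)], .singleton _, rfl, .inl ⟨⟨σ, rfl⟩, rfl⟩, rfl⟩
  | @stuck A σ hstuck =>
    exact ⟨[(some A, σ)], .singleton _, rfl, .inr ⟨⟨A, σ, rfl, hstuck⟩, rfl⟩, rfl⟩
  | @step c c' _ _ hstep _ ih =>
    obtain ⟨_ | ⟨c₀, cs⟩, hch, hhd, hend, rfl⟩ := ih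
    · cases hhd
    obtain rfl : c₀ = c' := Option.some.inj hhd
    refine ⟨c :: c₀ :: cs, List.isChain_cons_cons.2 ⟨hstep, hch⟩, rfl, ?_, rfl⟩
    rwa [List.getLast?_cons_cons]

theorem mem_Oh_iff {A : Agent I G} {τ : Store I} {h : Hist I} :
    h ∈ Oh A τ ↔ ∃ hs b, MaximalRun (some A, τ) hs b ∧ h = .fin hs b := by
  constructor
  · rintro (⟨cs, hch, hhd, ⟨hlast, rfl⟩ | ⟨hlast, rfl⟩⟩ | ⟨f, -, hf, -⟩)
    · exact ⟨_, true, maximalRun_of_isChain hch hhd (.inl ⟨hlast, rfl⟩), rfl⟩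
    · exact ⟨_, false, maximalRun_of_isChain hch hhd (.inr ⟨hlast, rfl⟩), rfl⟩
    · exact (not_forall_cStep f hf).elim
  · rintro ⟨hs, b, hrun, rfl⟩
    obtain ⟨cs, hch, hhd, ⟨hlast, rfl⟩ | ⟨hlast, rfl⟩, rfl⟩ := hrun.exists_isChain
    · exact .inl ⟨cs, hch, hhd, .inl ⟨hlast, rfl⟩⟩
    · exact .inl ⟨cs, hch, hhd, .inr ⟨hlast, rfl⟩⟩

theorem maximalRun_none_iff {σ : Store I} {hs : List (Store I)} {b : Bool} :
    MaximalRun ((none : Option (Agent I G)), σ) hs b ↔ hs = [σ] ∧ b = true := by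
  constructor
  · rintro (_ | _ | ⟨hstep, -⟩)
    · exact ⟨rfl, rfl⟩
    · exact hstep.elim
  · rintro ⟨rfl, rfl⟩
    exact .done σ

theorem maximalRun_some_iff {A : Agent I G} {σ : Store I} {hs : List (Store I)} {b : Bool} :
    MaximalRun (some A, σ) hs b ↔
      ((∀ c, ¬ CStep ((some A, σ) : Conf I G) c) ∧ hs = [σ] ∧ b = false) ∨
      ∃ c hs', CStep (some A, σ) c ∧ MaximalRun c hs' b ∧ hs = σ :: hs' := by
  constructor
  · rintro (_ | hstuck | ⟨hstep, hrun⟩)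
    · exact .inl ⟨hstuck, rfl, rfl⟩
    · exact .inr ⟨_, _, hstep, hrun, rfl⟩
  · rintro (⟨hstuck, rfl, rfl⟩ | ⟨c, hs', hstep, hrun, rfl⟩)
    · exact .stuck hstuck
    · exact .step hstep hrun

theorem exists_maximalRun (c : Conf I G) : ∃ hs b, MaximalRun c hs b := by
  induction c using WellFounded.induction (InvImage.wf Conf.size wellFounded_lt) with
  | _ c ih =>
    obtain ⟨_ | A, σ⟩ := c
    · exact ⟨_, _, .done σ⟩
    by_cases hstuck : ∃ c', CStep ((some A, σ) : Conf I G) c'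
    · obtain ⟨c', hstep⟩ := hstuck
      obtain ⟨hs, b, hrun⟩ := ih c' hstep.size_lt
      exact ⟨_, _, .step hstep hrun⟩
    · exact ⟨_, _, .stuck (not_exists.1 hstuck)⟩

end Runs

theorem FCon.exists_iff {F : Store I → Prop} {lc l : List (Store I)} (h : FCon F lc l) :
    (∃ σ ∈ lc, F σ) ↔ ∃ σ ∈ l, F σ := by
  induction h with
  | nil => rfl
  | keep _ ih => simp only [List.exists_mem_cons_iff] at ih ⊢; exact or_congr_right ih
  | @drop σ ρ lc l hρσ _ ih =>
    rw [List.exists_mem_cons_iff _ ρ l, ← ih]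
    exact ⟨.inr, fun h => h.elim (fun hρ => ⟨σ, List.mem_cons_self, hρσ.1 hρ⟩) id⟩

theorem FPCon.histReach_iff {F : Store I → Prop} {h h' : Hist I} (hc : FPCon F h h') :
    histReach F h ↔ histReach F h' := by
  cases h with
  | fin lc bc =>
    cases h' with
    | fin l b => exact hc.2.exists_iff
    | inf f => exact hc.elim
  | inf fc =>
    cases h' with
    | fin l b => exact hc.elim
    | inf f =>
      obtain ⟨g, hg, -, hfg, hdrop⟩ := hc
      refine ⟨fun ⟨n, hn⟩ => ⟨g n, hfg n ▸ hn⟩, fun ⟨m, hm⟩ => ?_⟩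
      by_cases hkept : m ∈ Set.range g
      · obtain ⟨n, rfl⟩ := hkept
        exact ⟨n, (hfg n).symm ▸ hm⟩
      -- the first kept index after `m` carries the store that `m` agrees with
      have hex : ∃ n, m < g n := ⟨m + 1, Nat.lt_of_lt_of_le m.lt_succ_self hg.le_apply⟩
      refine ⟨Nat.find hex, (hfg _).symm ▸ (hdrop m hkept _ (Nat.find_spec hex) ?_).1 hm⟩
      exact fun k hk => lt_of_le_of_ne (not_lt.1 (Nat.find_min hex hk)) fun hkm => hkept ⟨k, hkm⟩

section GuardedLists

def seqCompRest : List (Prim I G) → Option (Agent I G)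
  | [] => none
  | q :: l => some (seqComp q l)

theorem cStep_seqComp_iff {p : Prim I G} {l : List (Prim I G)} {σ τ : Store I}
    {o : Option (Agent I G)} :
    CStep ((some (seqComp p l), σ) : Conf I G) (o, τ) ↔ primStep p σ τ ∧ o = seqCompRest l := by
  constructor
  · intro h
    cases l with
    | nil => cases h with | prim hp => exact ⟨hp, rfl⟩
    | cons q l =>
      cases h with
      | seqE h => cases h with | prim hp => exact ⟨hp, rfl⟩
      | seqS h => cases h
  · rintro ⟨hp, rfl⟩
    cases l with
    | nil => exact .prim hp
    | cons q l => exact .seqE (.prim hp)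

theorem cStep_glist_iff {p : Prim I G} {l : List (Prim I G)} {σ τ : Store I}
    {o : Option (Agent I G)} :
    CStep ((some (Agent.glist p l), σ) : Conf I G) (o, τ) ↔
      (∃ ρ, primStep p σ ρ ∧ listExec l ρ τ) ∧ o = none := by
  constructor
  · intro h
    cases h with | glist hp hτ => exact ⟨⟨_, hp, hτ⟩, rfl⟩
  · rintro ⟨⟨ρ, hp, hτ⟩, rfl⟩
    exact .glist hp hτ

theorem glist_stuck_iff_seqComp_stuck {p : Prim I G} {l : List (Prim I G)}
    (hl : ∀ q ∈ l, safePrim q) {σ : Store I} :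
    (∀ c, ¬ CStep ((some (Agent.glist p l), σ) : Conf I G) c) ↔
      ∀ c, ¬ CStep ((some (seqComp p l), σ) : Conf I G) c := by
  simp only [← not_exists, Prod.exists, cStep_glist_iff, cStep_seqComp_iff]
  refine not_congr ⟨fun ⟨_, _, ⟨ρ, hp, _⟩, _⟩ => ⟨_, ρ, hp, rfl⟩, fun ⟨_, ρ, hp, _⟩ => ?_⟩
  obtain ⟨φ, hφ⟩ := exists_listExec hl ρ
  exact ⟨_, φ, ⟨ρ, hp, hφ⟩, rfl⟩

theorem maximalRun_seqCompRest {F : Store I → Prop} {l : List (Prim I G)}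
    (hl : ∀ q ∈ l, safePrim q) (hF : ∀ t : I, Prim.tell t ∈ l → ∀ σ : Store I, F (t ::ₘ σ) ↔ F σ)
    {ρ : Store I} {hs : List (Store I)} {b : Bool} (h : MaximalRun (seqCompRest l, ρ) hs b) :
    b = true ∧ ∃ φ, listExec l ρ φ ∧ FCon F [φ] hs := by
  induction l generalizing ρ hs with
  | nil =>
    obtain ⟨rfl, rfl⟩ := maximalRun_none_iff.1 h
    exact ⟨rfl, ρ, rfl, .keep .nil⟩
  | cons q l ih =>
    have hq := hl q List.mem_cons_self
    rcases maximalRun_some_iff.1 h with ⟨hstuck, -⟩ | ⟨⟨o, ρ'⟩, hs', hstep, hrun, rfl⟩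
    · obtain ⟨ρ', hq'⟩ := exists_primStep_of_safePrim hq ρ
      exact (hstuck _ (cStep_seqComp_iff.2 ⟨hq', rfl⟩)).elim
    obtain ⟨hq', rfl⟩ := cStep_seqComp_iff.1 hstep
    have hl' : ∀ r ∈ l, safePrim r := fun r hr => hl r (List.mem_cons_of_mem q hr)
    have hF' : ∀ t : I, Prim.tell t ∈ l → ∀ σ : Store I, F (t ::ₘ σ) ↔ F σ :=
      fun t ht => hF t (List.mem_cons_of_mem q ht)
    obtain ⟨rfl, φ, hφ, hcon⟩ := ih hl' hF' hrun
    have hρ' := iff_of_primStep hq (fun t ht => hF t (ht ▸ List.mem_cons_self)) hq'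
    exact ⟨rfl, φ, ⟨ρ', hq', hφ⟩, .drop (hρ'.symm.trans (iff_of_listExec hl' hF' hφ).symm) hcon⟩

variable {p : Prim I G} {l : List (Prim I G)} {F : Store I → Prop} {τ : Store I}

theorem exists_FPCon_seqComp_of_mem_Oh_glist (hl : ∀ q ∈ l, safePrim q)
    (hF : ∀ t : I, Prim.tell t ∈ l → ∀ σ : Store I, F (t ::ₘ σ) ↔ F σ)
    {h : Hist I} (hh : h ∈ Oh (Agent.glist p l) τ) :
    ∃ h' ∈ Oh (seqComp p l) τ, FPCon F h h' := by
  obtain ⟨hs, b, hrun, rfl⟩ := mem_Oh_iff.1 hh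
  rcases maximalRun_some_iff.1 hrun with ⟨hstuck, rfl, rfl⟩ | ⟨⟨o, φ⟩, hs', hstep, hrun', rfl⟩
  · have hstuck' := (glist_stuck_iff_seqComp_stuck hl).1 hstuck
    exact ⟨.fin [τ] false, mem_Oh_iff.2 ⟨_, _, .stuck hstuck', rfl⟩, rfl, .keep .nil⟩
  obtain ⟨⟨ρ, hp, hφ⟩, rfl⟩ := cStep_glist_iff.1 hstep
  obtain ⟨rfl, rfl⟩ := maximalRun_none_iff.1 hrun'
  obtain ⟨hs, b, hrunSC⟩ := exists_maximalRun ((seqCompRest l, ρ) : Conf I G)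
  obtain ⟨rfl, φ', hφ', hcon⟩ := maximalRun_seqCompRest hl hF hrunSC
  obtain rfl := listExec_functional hφ hφ'
  exact ⟨.fin (τ :: hs) true,
    mem_Oh_iff.2 ⟨_, _, .step (cStep_seqComp_iff.2 ⟨hp, rfl⟩) hrunSC, rfl⟩, rfl, .keep hcon⟩

theorem exists_FPCon_glist_of_mem_Oh_seqComp (hl : ∀ q ∈ l, safePrim q)
    (hF : ∀ t : I, Prim.tell t ∈ l → ∀ σ : Store I, F (t ::ₘ σ) ↔ F σ)
    {h' : Hist I} (hh' : h' ∈ Oh (seqComp p l) τ) :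
    ∃ h ∈ Oh (Agent.glist p l) τ, FPCon F h h' := by
  obtain ⟨hs, b, hrun, rfl⟩ := mem_Oh_iff.1 hh'
  rcases maximalRun_some_iff.1 hrun with ⟨hstuck, rfl, rfl⟩ | ⟨⟨o, ρ⟩, hs', hstep, hrun', rfl⟩
  · have hstuck' := (glist_stuck_iff_seqComp_stuck hl).2 hstuck
    exact ⟨.fin [τ] false, mem_Oh_iff.2 ⟨_, _, .stuck hstuck', rfl⟩, rfl, .keep .nil⟩
  obtain ⟨hp, rfl⟩ := cStep_seqComp_iff.1 hstep
  obtain ⟨rfl, φ, hφ, hcon⟩ := maximalRun_seqCompRest hl hF hrun'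
  have hstepGL := cStep_glist_iff.2 ⟨⟨ρ, hp, hφ⟩, rfl⟩
  exact ⟨.fin [τ, φ] true, mem_Oh_iff.2 ⟨_, _, .step hstepGL (.done φ), rfl⟩, rfl, .keep hcon⟩

end GuardedLists

end Bach

/-- if `p₁,…,pₙ` are tell or graphical primitives whose told si-terms do
not affect the truth value of the propositional state formula `F` on any store, then the
guarded list `GL = [p → p₁,…,pₙ]` is an F-preserving contraction of
`SC = p; p₁; ⋯; pₙ`: for every store `τ`, `Oh(GL)(τ) ≪_F Oh(SC)(τ)`.  It follows that
`Reach(F)` holds of the executions of `SC` from any store `τ` iff it holds of the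
executions of `GL` from `τ`. -/
theorem glist_F_preserving (I G : Type) (p : Prim I G) (l : List (Prim I G))
    (hl : ∀ q ∈ l, safePrim q) (F : Store I → Prop)
    (hF : ∀ t : I, Prim.tell t ∈ l → ∀ σ : Store I, F (t ::ₘ σ) ↔ F σ) :
    (∀ τ : Store I, ∀ h ∈ Oh (Agent.glist p l) τ,
        ∃ h' ∈ Oh (seqComp p l) τ, FPCon F h h') ∧
    (∀ τ : Store I,
        (∃ h ∈ Oh (seqComp p l) τ, histReach F h) ↔
        (∃ h ∈ Oh (Agent.glist p l) τ, histReach F h)) := by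
  refine ⟨fun τ h => exists_FPCon_seqComp_of_mem_Oh_glist hl hF, fun τ => ⟨?_, ?_⟩⟩
  · rintro ⟨h', hh', hreach⟩
    obtain ⟨h, hh, hcon⟩ := exists_FPCon_glist_of_mem_Oh_seqComp hl hF hh'
    exact ⟨h, hh, hcon.histReach_iff.2 hreach⟩
  · rintro ⟨h, hh, hreach⟩
    obtain ⟨h', hh', hcon⟩ := exists_FPCon_seqComp_of_mem_Oh_glist hl hF hh
    exact ⟨h', hh', hcon.histReach_iff.1 hreach⟩
end

section
/- There is no modular embedding of gdLg(get, tell) into rLg(get, tell): gdLg(get, tell) ≰ rLg(get, tell). That is, there exist no compositional coder C from the get/tell fragment with guarded lists into the get/tell fragment without guarded lists and element-wise termination-preserving decoder D_el such that for every agent A of gdLg(get, tell), Of(A) = {D_el(x) : x ∈ Of(C(A))}. -/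
/-!
A coder sends `tell a` to some `T` and the atomic double consumption `[get a → get a]` to some `Z`,
neither containing guarded lists. `T` has a successful run, ending in some store `θ`. Since
`tell a; [get a → get a]` never succeeds and `tell a; ([get a → get a] + get a)` never deadlocks,
`Z` cannot move at `θ`. A `get`/`tell` agent without guarded lists moves by single primitives,
each enabled by part of the store, so `Z` is stuck at `θ + θ` as well; by monotonicity `T; T`
reaches `θ + θ` from the empty store. Hence the code of `tell a; tell a; [get a → get a]`
deadlocks, although that agent always succeeds.
-/

namespace Bach

open Relation

variable {I G : Type}

def Stuck (A : Agent I G) (σ : Store I) : Prop := ∀ o τ, ¬ Step A σ o τ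

lemma Stuck.not_cStep {A : Agent I G} {σ : Store I} (h : Stuck A σ) :
    ∀ c, ¬ CStep ((some A, σ) : Conf I G) c :=
  fun ⟨o, τ⟩ => h o τ

lemma mem_obs_true_iff {A : Agent I G} {σ : Store I} :
    (σ, true) ∈ Obs A ↔ ReflTransGen CStep ((some A, 0) : Conf I G) (none, σ) := by
  simp [Obs]

lemma mem_obs_false_iff {A : Agent I G} {σ : Store I} :
    (σ, false) ∈ Obs A ↔ ∃ B, ReflTransGen CStep ((some A, 0) : Conf I G) (some B, σ) ∧
      ∀ c, ¬ CStep ((some B, σ) : Conf I G) c := by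
  simp [Obs]

section Embedding

variable {C : Agent I G → Agent I G} {D : Store I × Bool → Store I × Bool}
  {L' L : Set (Agent I G)} {A : Agent I G}

lemma IsModularEmbedding.exists_mem_obs_coder (h : IsModularEmbedding C D L' L) (hA : A ∈ L')
    {σ : Store I} {b : Bool} (hx : (σ, b) ∈ Obs A) : ∃ σ', (σ', b) ∈ Obs (C A) := by
  rw [h.2.2.2.2.2 A hA] at hx
  obtain ⟨x, hx, hDx⟩ := hx
  have hb : x.2 = b := by rw [← h.2.2.2.2.1 x, hDx]
  exact ⟨x.1, hb ▸ hx⟩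

lemma IsModularEmbedding.forall_not_mem_obs_coder (h : IsModularEmbedding C D L' L) (hA : A ∈ L')
    {b : Bool} (hno : ∀ σ, (σ, b) ∉ Obs A) (σ : Store I) : (σ, b) ∉ Obs (C A) := by
  intro hx
  apply hno (D (σ, b)).1
  rw [h.2.2.2.2.2 A hA]
  exact ⟨(σ, b), hx, Prod.ext rfl (h.2.2.2.2.1 _)⟩

end Embedding

section Runs

lemma Step.sizeOf_le {A : Agent I G} {σ τ : Store I} {o : Option (Agent I G)}
    (h : Step A σ o τ) : sizeOf o ≤ sizeOf A := by
  induction h <;> simp_all <;> omega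

lemma CStep.sizeOf_lt {c d : Conf I G} (h : CStep c d) : sizeOf d.1 < sizeOf c.1 := by
  obtain ⟨_ | A, σ⟩ := c
  · exact h.elim
  · have := Step.sizeOf_le h
    simp only [Option.some.sizeOf_spec]
    omega

lemma exists_reflTransGen_final (c : Conf I G) :
    ∃ d, ReflTransGen CStep c d ∧ ∀ e, ¬ CStep d e := by
  have hwf : WellFounded (flip (CStep (I := I) (G := G))) :=
    Subrelation.wf (fun h => CStep.sizeOf_lt h) (measure fun c : Conf I G => sizeOf c.1).wf
  obtain ⟨d, hd, hmin⟩ := hwf.has_min {d | ReflTransGen CStep c d} ⟨c, .refl⟩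
  exact ⟨d, hd, fun e he => hmin e (hd.tail he) he⟩

def seqConf (B : Agent I G) : Conf I G → Conf I G
  | (some A, σ) => (some (A.seq B), σ)
  | (none, σ) => (some B, σ)

lemma CStep.seqConf (B : Agent I G) {c d : Conf I G} (h : CStep c d) :
    CStep (seqConf B c) (seqConf B d) := by
  obtain ⟨_ | A, σ⟩ := c
  · exact h.elim
  · obtain ⟨_ | A', τ⟩ := d
    · exact Step.seqE h
    · exact Step.seqS h

lemma reflTransGen_seq (B : Agent I G) {A : Agent I G} {σ τ : Store I}
    (h : ReflTransGen CStep ((some A, σ) : Conf I G) (none, τ)) :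
    ReflTransGen CStep ((some (A.seq B), σ) : Conf I G) (some B, τ) :=
  h.lift (seqConf B) fun _ _ => CStep.seqConf B

lemma reflTransGen_none {σ : Store I} {c : Conf I G}
    (h : ReflTransGen CStep ((none, σ) : Conf I G) c) : c = (none, σ) := by
  rcases h.cases_head with h | ⟨_, hc, _⟩
  · exact h.symm
  · exact hc.elim

lemma Stuck.reflTransGen_eq {A : Agent I G} {σ : Store I} {c : Conf I G} (hA : Stuck A σ)
    (h : ReflTransGen CStep ((some A, σ) : Conf I G) c) : c = (some A, σ) := by
  rcases h.cases_head with h | ⟨⟨o, τ⟩, hc, _⟩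
  · exact h.symm
  · exact (hA o τ hc).elim

lemma eq_of_reflTransGen_of_step_none {A B : Agent I G} {σ ρ : Store I}
    (hA : ∀ σ o τ, Step A σ o τ → o = none)
    (h : ReflTransGen CStep ((some A, σ) : Conf I G) (some B, ρ)) : B = A ∧ ρ = σ := by
  rcases h.cases_head with h | ⟨⟨o, τ⟩, hc, h⟩
  · cases h
    exact ⟨rfl, rfl⟩
  · obtain rfl := hA σ o τ hc
    cases reflTransGen_none h

end Runs

section Deadlock

lemma stuck_seq_iff {A B : Agent I G} {σ : Store I} : Stuck (A.seq B) σ ↔ Stuck A σ := by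
  refine ⟨fun h o τ hA => ?_, fun h o τ hAB => ?_⟩
  · cases o
    · exact h _ _ (.seqE hA)
    · exact h _ _ (.seqS hA)
  · cases hAB with
    | seqE hA => exact h _ _ hA
    | seqS hA => exact h _ _ hA

lemma stuck_par_iff {A B : Agent I G} {σ : Store I} :
    Stuck (A.par B) σ ↔ Stuck A σ ∧ Stuck B σ := by
  refine ⟨fun h => ⟨fun o τ hA => ?_, fun o τ hB => ?_⟩, fun h o τ hAB => ?_⟩
  · cases o
    · exact h _ _ (.parLE hA)
    · exact h _ _ (.parLS hA)
  · cases o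
    · exact h _ _ (.parRE hB)
    · exact h _ _ (.parRS hB)
  · cases hAB with
    | parLE hA => exact h.1 _ _ hA
    | parLS hA => exact h.1 _ _ hA
    | parRE hB => exact h.2 _ _ hB
    | parRS hB => exact h.2 _ _ hB

lemma stuck_choice_iff {A B : Agent I G} {σ : Store I} :
    Stuck (A.choice B) σ ↔ Stuck A σ ∧ Stuck B σ := by
  refine ⟨fun h => ⟨fun o τ hA => h o τ (.choiceL hA), fun o τ hB => h o τ (.choiceR hB)⟩,
    fun h o τ hAB => ?_⟩
  cases hAB with
  | choiceL hA => exact h.1 _ _ hA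
  | choiceR hB => exact h.2 _ _ hB

variable {X : Set PKind}

lemma Step.mem_rLg {A A' : Agent I G} {σ τ : Store I} (h : Step A σ (some A') τ)
    (hA : A ∈ rLg X) : A' ∈ rLg X := by
  generalize ho : some A' = o at h
  induction h generalizing A' with
  | prim _ | glist _ _ => cases ho
  | seqE | parLE | parRE | seqS | parLS | parRS | choiceL | choiceR =>
    cases ho
    simp_all [rLg, agentIn, glFree]

lemma primStep_add_right {p : Prim I G} (hX : PKind.nask ∉ X) (hp : primIn X p)
    {σ τ : Store I} (h : primStep p σ τ) (μ : Store I) : primStep p (σ + μ) (τ + μ) := by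
  cases p with
  | nask => exact (hX hp).elim
  | tell | get => simp_all [primStep, Multiset.cons_add]
  | ask | gr => simp_all [primStep]

lemma Step.add_right {A : Agent I G} {σ τ : Store I} {o : Option (Agent I G)}
    (hX : PKind.nask ∉ X) (h : Step A σ o τ) (hA : A ∈ rLg X) (μ : Store I) :
    Step A (σ + μ) o (τ + μ) := by
  induction h with
  | prim hp => exact .prim (primStep_add_right hX hA.1 hp μ)
  | glist => exact hA.2.elim
  | seqE _ ih => exact .seqE (ih ⟨hA.1.1, hA.2.1⟩)
  | seqS _ ih => exact .seqS (ih ⟨hA.1.1, hA.2.1⟩)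
  | parLE _ ih => exact .parLE (ih ⟨hA.1.1, hA.2.1⟩)
  | parLS _ ih => exact .parLS (ih ⟨hA.1.1, hA.2.1⟩)
  | parRE _ ih => exact .parRE (ih ⟨hA.1.2, hA.2.2⟩)
  | parRS _ ih => exact .parRS (ih ⟨hA.1.2, hA.2.2⟩)
  | choiceL _ ih => exact .choiceL (ih ⟨hA.1.1, hA.2.1⟩)
  | choiceR _ ih => exact .choiceR (ih ⟨hA.1.2, hA.2.2⟩)

lemma reflTransGen_add_right (hX : PKind.nask ∉ X) {c d : Conf I G}
    (h : ReflTransGen CStep c d) (hc : ∀ A ∈ c.1, A ∈ rLg X) (μ : Store I) :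
    ReflTransGen CStep (c.1, c.2 + μ) (d.1, d.2 + μ) := by
  induction h using ReflTransGen.head_induction_on with
  | refl => exact .refl
  | @head c c' hstep _ ih =>
    obtain ⟨_ | A, σ⟩ := c
    · exact hstep.elim
    obtain ⟨o, τ⟩ := c'
    have hA := hc A rfl
    refine .head (b := (o, τ + μ)) (Step.add_right hX hstep hA μ) (ih fun A' hA' => ?_)
    obtain rfl : o = some A' := hA'
    exact hstep.mem_rLg hA

lemma exists_primStep_of_primStep_add {p : Prim I G} (hX : PKind.nask ∉ X) (hp : primIn X p)
    {σ σ' τ : Store I} (h : primStep p (σ + σ') τ) :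
    (∃ ρ, primStep p σ ρ) ∨ ∃ ρ, primStep p σ' ρ := by
  cases p with
  | nask => exact (hX hp).elim
  | tell t => exact .inl ⟨t ::ₘ σ, rfl⟩
  | gr => exact .inl ⟨σ, rfl⟩
  | ask t =>
    rcases Multiset.mem_add.1 h.1 with ht | ht
    · exact .inl ⟨σ, ht, rfl⟩
    · exact .inr ⟨σ', ht, rfl⟩
  | get t =>
    have ht : t ∈ σ + σ' := by
      rw [show σ + σ' = t ::ₘ τ from h]
      exact Multiset.mem_cons_self t τ
    rcases Multiset.mem_add.1 ht with ht | ht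
    · exact .inl (Multiset.exists_cons_of_mem ht)
    · exact .inr (Multiset.exists_cons_of_mem ht)

/-- Without guarded lists a transition is a single primitive, and without `nask` a primitive
enabled at `σ + σ'` is already enabled at `σ` or at `σ'`. -/
lemma Stuck.add (hX : PKind.nask ∉ X) {A : Agent I G} (hA : A ∈ rLg X) {σ σ' : Store I}
    (h : Stuck A σ) (h' : Stuck A σ') : Stuck A (σ + σ') := by
  induction A with
  | prim p =>
    intro o τ hstep
    cases hstep with
    | prim hp =>
      rcases exists_primStep_of_primStep_add hX hA.1 hp with ⟨ρ, hρ⟩ | ⟨ρ, hρ⟩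
      · exact h _ _ (.prim hρ)
      · exact h' _ _ (.prim hρ)
  | glist => exact hA.2.elim
  | seq A B ihA _ =>
    rw [stuck_seq_iff] at h h' ⊢
    exact ihA ⟨hA.1.1, hA.2.1⟩ h h'
  | par A B ihA ihB =>
    rw [stuck_par_iff] at h h' ⊢
    exact ⟨ihA ⟨hA.1.1, hA.2.1⟩ h.1 h'.1, ihB ⟨hA.1.2, hA.2.2⟩ h.2 h'.2⟩
  | choice A B ihA ihB =>
    rw [stuck_choice_iff] at h h' ⊢
    exact ⟨ihA ⟨hA.1.1, hA.2.1⟩ h.1 h'.1, ihB ⟨hA.1.2, hA.2.2⟩ h.2 h'.2⟩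

/-- If `T` can succeed with final store `θ`, the first two hypotheses force `Z` to be stuck at
`θ`; then `Z` is stuck at `θ + θ` too, which `T; (T; Z)` reaches. -/
theorem exists_mem_obs_false_seq_seq (hX : PKind.nask ∉ X) {T Z : Agent I G} (W : Agent I G)
    (hT : T ∈ rLg X) (hZ : Z ∈ rLg X) (hTsucc : ∃ θ, (θ, true) ∈ Obs T)
    (hTZ : ∀ σ, (σ, true) ∉ Obs (T.seq Z)) (hTZW : ∀ σ, (σ, false) ∉ Obs (T.seq (Z.choice W))) :
    ∃ σ, (σ, false) ∈ Obs (T.seq (T.seq Z)) := by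
  obtain ⟨θ, hθ⟩ := hTsucc
  rw [mem_obs_true_iff] at hθ
  have hZθ : Stuck Z θ := by
    intro o τ hstep
    obtain ⟨⟨_ | B, ρ⟩, hrun, hfinal⟩ := exists_reflTransGen_final (o, τ)
    · exact hTZ ρ (mem_obs_true_iff.2 ((reflTransGen_seq Z hθ).trans (.head (b := (o, τ)) hstep hrun)))
    · exact hTZW ρ (mem_obs_false_iff.2 ⟨B,
        (reflTransGen_seq _ hθ).trans (.head (b := (o, τ)) (Step.choiceL hstep) hrun), hfinal⟩)
  have hθθ : ReflTransGen CStep ((some T, θ) : Conf I G) (none, θ + θ) := by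
    simpa using reflTransGen_add_right hX hθ (fun A hA => by cases hA; exact hT) θ
  exact ⟨θ + θ, mem_obs_false_iff.2 ⟨Z,
    (reflTransGen_seq _ hθ).trans (reflTransGen_seq Z hθθ), (hZθ.add hX hZ hZθ).not_cStep⟩⟩

end Deadlock

section GetTwice

variable (a : I)

def getTwice : Agent I G := .glist (.get a) [.get a]

lemma stuck_getTwice_singleton : Stuck (getTwice a : Agent I G) {a} := by
  rintro o τ (h | ⟨hp, ρ, hq, -⟩)
  rw [show ({a} : Store I) = a ::ₘ 0 from rfl] at hp
  obtain rfl := Multiset.cons_inj_right a |>.1 hp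
  exact Multiset.cons_ne_zero hq.symm

lemma step_getTwice_pair : Step (getTwice a : Agent I G) (a ::ₘ a ::ₘ 0) none 0 :=
  .glist (ρ := a ::ₘ 0) rfl ⟨0, rfl, rfl⟩

lemma step_tell_seq {A : Agent I G} {σ τ : Store I} {o : Option (Agent I G)}
    (h : Step ((Agent.prim (.tell a)).seq A) σ o τ) : o = some A ∧ τ = a ::ₘ σ := by
  cases h with
  | seqE h =>
    cases h with
    | prim h => exact ⟨rfl, h⟩
  | seqS h => cases h

lemma reflTransGen_tell_seq {A : Agent I G} {σ : Store I} {c : Conf I G}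
    (h : ReflTransGen CStep ((some ((Agent.prim (.tell a)).seq A), σ) : Conf I G) c) :
    c = (some ((Agent.prim (.tell a)).seq A), σ) ∨
      ReflTransGen CStep ((some A, a ::ₘ σ) : Conf I G) c := by
  rcases h.cases_head with h | ⟨⟨o, τ⟩, hc, h⟩
  · exact .inl h.symm
  · obtain ⟨rfl, rfl⟩ := step_tell_seq a hc
    exact .inr h

lemma tell_seq_getTwice_not_success (σ : Store I) :
    (σ, true) ∉ Obs ((Agent.prim (.tell a)).seq (getTwice a) : Agent I G) := by
  rw [mem_obs_true_iff]
  intro h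
  rcases reflTransGen_tell_seq a h with h | h
  · cases h
  · cases (stuck_getTwice_singleton a).reflTransGen_eq h

lemma tell_seq_getTwice_choice_get_not_deadlock (σ : Store I) :
    (σ, false) ∉ Obs
      ((Agent.prim (.tell a)).seq ((getTwice a).choice (.prim (.get a))) : Agent I G) := by
  rw [mem_obs_false_iff]
  rintro ⟨B, h, hB⟩
  rcases reflTransGen_tell_seq a h with h | h
  · cases h
    exact hB (some _, _) (.seqE (.prim rfl))
  · have hterm : ∀ σ o τ, Step ((getTwice a).choice (.prim (.get a)) : Agent I G) σ o τ →
        o = none := by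
      intro σ o τ hs
      cases hs with
      | choiceL hs => cases hs; rfl
      | choiceR hs => cases hs; rfl
    obtain ⟨rfl, rfl⟩ := eq_of_reflTransGen_of_step_none hterm h
    exact hB (none, 0) (.choiceR (.prim rfl))

lemma tell_seq_tell_seq_getTwice_not_deadlock (σ : Store I) :
    (σ, false) ∉ Obs ((Agent.prim (.tell a)).seq
      ((Agent.prim (.tell a)).seq (getTwice a)) : Agent I G) := by
  rw [mem_obs_false_iff]
  rintro ⟨B, h, hB⟩
  rcases reflTransGen_tell_seq a h with h | h
  · cases h
    exact hB (some _, _) (.seqE (.prim rfl))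
  rcases reflTransGen_tell_seq a h with h | h
  · cases h
    exact hB (some _, _) (.seqE (.prim rfl))
  · obtain ⟨rfl, rfl⟩ := eq_of_reflTransGen_of_step_none (by rintro σ o τ (_ | _); rfl) h
    exact hB (none, 0) (step_getTwice_pair a)

end GetTwice

end Bach

open Bach

theorem no_modEmbed_get_tell_general (I G : Type) (a : I) :
    ¬ ModEmbed (gdLg ({PKind.get, PKind.tell} : Set PKind) : Set (Agent I G))
        (rLg ({PKind.get, PKind.tell} : Set PKind)) := by
  rintro ⟨C, D, hCD⟩
  have ⟨hC, hseq, _, hchoice, _⟩ := hCD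
  set X : Set PKind := {PKind.get, PKind.tell} with hX
  have ht : Agent.prim (.tell a) ∈ gdLg (G := G) X := by simp [hX, gdLg, agentIn, primIn]
  have hg : Agent.prim (.get a) ∈ gdLg (G := G) X := by simp [hX, gdLg, agentIn, primIn]
  have hgg : getTwice a ∈ gdLg (G := G) X := by simp [hX, gdLg, getTwice, agentIn, primIn]
  have hsrc₁ : (Agent.prim (.tell a)).seq (getTwice a) ∈ gdLg (G := G) X := ⟨ht, hgg⟩
  have hchc : (getTwice a).choice (.prim (.get a)) ∈ gdLg (G := G) X := ⟨hgg, hg⟩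
  have hsrc₂ : (Agent.prim (.tell a)).seq ((getTwice a).choice (.prim (.get a))) ∈
      gdLg (G := G) X := ⟨ht, hchc⟩
  have hsrc₃ : (Agent.prim (.tell a)).seq ((Agent.prim (.tell a)).seq (getTwice a)) ∈
      gdLg (G := G) X := ⟨ht, hsrc₁⟩
  obtain ⟨σ, hσ⟩ := exists_mem_obs_false_seq_seq (by simp [hX]) (C (.prim (.get a)))
    (hC _ ht) (hC _ hgg) (hCD.exists_mem_obs_coder ht (mem_obs_true_iff.2 (.single (.prim rfl))))
    (by
      rw [← hseq _ _ ht hgg]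
      exact hCD.forall_not_mem_obs_coder hsrc₁ (tell_seq_getTwice_not_success a))
    (by
      rw [← hchoice _ _ hgg hg, ← hseq _ _ ht hchc]
      exact hCD.forall_not_mem_obs_coder hsrc₂ (tell_seq_getTwice_choice_get_not_deadlock a))
  rw [← hseq _ _ ht hgg, ← hseq _ _ ht hsrc₁] at hσ
  exact hCD.forall_not_mem_obs_coder hsrc₃ (tell_seq_tell_seq_getTwice_not_deadlock a) σ hσ

/-- there is no modular embedding of `gdLg(get, tell)` into
`rLg(get, tell)` (assuming at least two distinct si-terms). -/
theorem no_modEmbed_get_tell (I G : Type) (a b : I) (hab : a ≠ b) :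
    ¬ ModEmbed (gdLg ({PKind.get, PKind.tell} : Set PKind) : Set (Agent I G))
        (rLg ({PKind.get, PKind.tell} : Set PKind)) :=
  no_modEmbed_get_tell_general I G a
end
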